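/- arXiv:0711.1391 — 3 statements merged into one kernel-verified Lean document; each statement's English description precedes it below -/
import Mathlib

section
/- Let w be an element of a Coxeter group W with a fixed reduced expression w = w_1...w_k, and suppose that for every proper mask σ (i.e., σ ≠ (1,...,1)) one has D(σ) > 0. Then for every x ∈ W, the polynomial P_x(q) = Σ_{σ : w^σ = x} q^{d(σ)} has degree at most (l(w) − l(x) − 1)/2 whenever x < w in Bruhat order. -/
open CoxeterSystem Polynomial

variable {B W : Type*} [Group W] {M : CoxeterMatrix B}

namespace DeodharMu

noncomputable section

/-- The subword of `ω` selected by the positions where the mask `σ` is `true`. -/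
def maskedWord (ω : List B) (σ : List Bool) : List B :=
  ((ω.zip σ).filter (·.2)).map (·.1)

/-- The subword product `w^σ` determined by a mask `σ`. -/
def maskProd (cs : CoxeterSystem M W) (ω : List B) (σ : List Bool) : W :=
  cs.wordProd (maskedWord ω σ)

/-- Position `j` (0-indexed) of `ω` is a defect with respect to the mask `σ`:
multiplying the initial subword product `w^{σ[j-1]}` by the letter `ω_j` decreases length. -/
def IsDefect (cs : CoxeterSystem M W) (ω : List B) (σ : List Bool) (j : ℕ) : Prop :=
  cs.length (maskProd cs (ω.take (j + 1)) (σ.take j ++ [true])) <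
    cs.length (maskProd cs (ω.take j) (σ.take j))

instance (cs : CoxeterSystem M W) (ω : List B) (σ : List Bool) :
    DecidablePred (IsDefect cs ω σ) := fun _ => Nat.decLt _ _

/-- The number of defects `d(σ)`. -/
def defectCount (cs : CoxeterSystem M W) (ω : List B) (σ : List Bool) : ℕ :=
  ((Finset.range ω.length).filter (IsDefect cs ω σ)).card

/-- The number of zero-defects: positions with mask-value 0 that are defects. -/
def zeroDefectCount (cs : CoxeterSystem M W) (ω : List B) (σ : List Bool) : ℕ :=
  ((Finset.range ω.length).filter
    (fun j => σ.getD j true = false ∧ IsDefect cs ω σ j)).card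

/-- The number of plain-zeros: positions with mask-value 0 that are not defects. -/
def plainZeroCount (cs : CoxeterSystem M W) (ω : List B) (σ : List Bool) : ℕ :=
  ((Finset.range ω.length).filter
    (fun j => σ.getD j true = false ∧ ¬ IsDefect cs ω σ j)).card

/-- The Deodhar statistic `D(σ) = #plain-zeros − #zero-defects`. -/
def Dstat (cs : CoxeterSystem M W) (ω : List B) (σ : List Bool) : ℤ :=
  (plainZeroCount cs ω σ : ℤ) - zeroDefectCount cs ω σ

/-- A mask is proper if it is not the all-ones mask. -/
def IsProperMask (ω : List B) (σ : List Bool) : Prop :=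
  σ.length = ω.length ∧ σ ≠ List.replicate ω.length true

/-- A μ-mask: a proper mask with Deodhar statistic `D(σ) = 1`. -/
def IsMuMask (cs : CoxeterSystem M W) (ω : List B) (σ : List Bool) : Prop :=
  IsProperMask ω σ ∧ Dstat cs ω σ = 1

/-- A reduced word is Deodhar if every proper mask on it has positive Deodhar statistic. -/
def IsDeodharWord (cs : CoxeterSystem M W) (ω : List B) : Prop :=
  ∀ σ : List Bool, IsProperMask ω σ → 0 < Dstat cs ω σ

/-- An element is Deodhar if every reduced expression for it is a Deodhar word. -/
def IsDeodhar (cs : CoxeterSystem M W) (w : W) : Prop :=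
  ∀ ω : List B, cs.IsReduced ω → cs.wordProd ω = w → IsDeodharWord cs ω

/-- Bruhat order via the subword property: `x ≤ w` iff `x` is the product of a subword of
some (equivalently any) reduced expression for `w`. -/
def bruhatLE (cs : CoxeterSystem M W) (x w : W) : Prop :=
  ∃ (ω : List B) (σ : List Bool), cs.IsReduced ω ∧ cs.wordProd ω = w ∧
    σ.length = ω.length ∧ maskProd cs ω σ = x

/-- Strict Bruhat order. -/
def bruhatLT (cs : CoxeterSystem M W) (x w : W) : Prop :=
  bruhatLE cs x w ∧ x ≠ w

/-- The prototype polynomial `P_x(q) = Σ_{σ : w^σ = x} q^{d(σ)}`. -/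
def Ppoly [DecidableEq W] (cs : CoxeterSystem M W) (ω : List B) (x : W) : Polynomial ℤ :=
  ∑ m : Fin ω.length → Bool,
    if maskProd cs ω (List.ofFn m) = x then (Polynomial.X : Polynomial ℤ) ^ defectCount cs ω (List.ofFn m) else 0

/-- The μ-coefficient of a family `P` of polynomials: the coefficient of
`q^{(l(w)-l(x)-1)/2}`, taken to be zero when this exponent is not a nonnegative integer. -/
def mu (cs : CoxeterSystem M W) (P : W → W → Polynomial ℤ) (x w : W) : ℤ :=
  if cs.length x < cs.length w ∧ (cs.length w - cs.length x) % 2 = 1 then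
    (P x w).coeff ((cs.length w - cs.length x - 1) / 2)
  else 0

/-- A single commutation move: interchange two adjacent commuting generators. -/
def CommMove (M : CoxeterMatrix B) (ω ω' : List B) : Prop :=
  ∃ (l₁ l₂ : List B) (s t : B), M s t = 2 ∧ ω = l₁ ++ [s, t] ++ l₂ ∧ ω' = l₁ ++ [t, s] ++ l₂

/-- An element is fully commutative if any two of its reduced expressions are related
by a sequence of commutation moves. -/
def FullyCommutative (cs : CoxeterSystem M W) (w : W) : Prop :=
  ∀ ω ω' : List B, cs.IsReduced ω → cs.wordProd ω = w → cs.IsReduced ω' → cs.wordProd ω' = w →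
    Relation.ReflTransGen (CommMove M) ω ω'

/-- A word contains a short-braid: a consecutive factor `s t s` with `m(s,t) ≥ 3`. -/
def HasShortBraid (M : CoxeterMatrix B) (ω : List B) : Prop :=
  ∃ (l₁ l₂ : List B) (s t : B), 3 ≤ M s t ∧ ω = l₁ ++ [s, t, s] ++ l₂

/-- An element is short-braid avoiding if no reduced expression for it contains a
factor `s t s` with `s`, `t` non-commuting generators. -/
def ShortBraidAvoiding (cs : CoxeterSystem M W) (w : W) : Prop :=
  ∀ ω : List B, cs.IsReduced ω → cs.wordProd ω = w → ¬ HasShortBraid M ω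

/-- The heap partial order on positions of a word: the transitive closure of
`i ⋖ j` when `i < j` and the letters at `i` and `j` do not commute. -/
def HeapLT (cs : CoxeterSystem M W) (ω : List B) (i j : Fin ω.length) : Prop :=
  Relation.TransGen
    (fun i j : Fin ω.length => (i : ℕ) < (j : ℕ) ∧
      ¬ Commute (cs.simple (ω.get i)) (cs.simple (ω.get j))) i j

/-- Remove from a list the entries whose (0-indexed) positions lie in `J`. -/
def removeIdx {α : Type*} (l : List α) (J : Finset ℕ) : List α :=
  (((List.range l.length).zip l).filter (fun p => p.1 ∉ J)).map Prod.snd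

end

end DeodharMu

/-!
Read a mask from left to right. Each letter changes the length of the running subword product
by `+1` (mask `1`, no defect), `-1` (mask `1`, defect) or `0` (mask `0`), and this gives
`l(w) - l(w^σ) - 2 d(σ) = D(σ)`. For a proper mask `D(σ) ≥ 1`, so
`2 d(σ) ≤ l(w) - l(w^σ) - 1`, which bounds every exponent occurring in `P_x`.
-/

namespace DeodharMu

open Finset

lemma card_filter_range_succ_of_iff {p q : ℕ → Prop} [DecidablePred p] [DecidablePred q]
    {n : ℕ} (hpq : ∀ j < n, p j ↔ q j) :
    #{j ∈ range (n + 1) | p j} = #{j ∈ range n | q j} + if p n then 1 else 0 := by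
  rw [range_add_one, filter_insert, filter_congr fun j hj => hpq j (mem_range.mp hj)]
  split_ifs
  · rw [card_insert_of_notMem (by simp)]
  · rfl

lemma maskedWord_replicate_true (ω : List B) :
    maskedWord ω (List.replicate ω.length true) = ω := by
  induction ω with
  | nil => rfl
  | cons s ω ih => simpa [maskedWord, List.replicate_succ] using ih

section

variable (cs : CoxeterSystem M W) {ω : List B} {σ : List Bool}

lemma maskedWord_append_singleton (h : σ.length = ω.length) (s : B) (b : Bool) :
    maskedWord (ω ++ [s]) (σ ++ [b]) = maskedWord ω σ ++ if b then [s] else [] := by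
  unfold maskedWord
  rw [List.zip_append h.symm, List.filter_append, List.map_append]
  cases b <;> simp

lemma maskProd_append_singleton (h : σ.length = ω.length) (s : B) (b : Bool) :
    maskProd cs (ω ++ [s]) (σ ++ [b]) = maskProd cs ω σ * if b then cs.simple s else 1 := by
  unfold maskProd
  rw [maskedWord_append_singleton h, cs.wordProd_append]
  cases b <;> simp

lemma isDefect_append_singleton_of_lt (h : σ.length = ω.length) (s : B) (b : Bool) {j : ℕ}
    (hj : j < ω.length) : IsDefect cs (ω ++ [s]) (σ ++ [b]) j ↔ IsDefect cs ω σ j := by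
  unfold IsDefect
  rw [List.take_append_of_le_length (by omega : j + 1 ≤ ω.length),
    List.take_append_of_le_length (by omega : j ≤ σ.length),
    List.take_append_of_le_length hj.le]

lemma isDefect_append_singleton_length (h : σ.length = ω.length) (s : B) (b : Bool) :
    IsDefect cs (ω ++ [s]) (σ ++ [b]) ω.length ↔
      cs.length (maskProd cs ω σ * cs.simple s) < cs.length (maskProd cs ω σ) := by
  unfold IsDefect
  rw [List.take_of_length_le (by simp), ← h, List.take_left, h, List.take_left,
    maskProd_append_singleton cs h]
  simp

lemma getD_append_singleton_length (h : σ.length = ω.length) (b : Bool) :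
    (σ ++ [b]).getD ω.length true = b := by
  simp [List.getD, ← h]

lemma defectCount_append_singleton (h : σ.length = ω.length) (s : B) (b : Bool) :
    defectCount cs (ω ++ [s]) (σ ++ [b]) = defectCount cs ω σ +
      if cs.length (maskProd cs ω σ * cs.simple s) < cs.length (maskProd cs ω σ) then 1 else 0 := by
  unfold defectCount
  rw [List.length_append, List.length_singleton,
    card_filter_range_succ_of_iff fun j hj => isDefect_append_singleton_of_lt cs h s b hj]
  simp only [isDefect_append_singleton_length cs h]

lemma zeroDefectCount_append_singleton (h : σ.length = ω.length) (s : B) (b : Bool) :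
    zeroDefectCount cs (ω ++ [s]) (σ ++ [b]) = zeroDefectCount cs ω σ +
      if b = false ∧
        cs.length (maskProd cs ω σ * cs.simple s) < cs.length (maskProd cs ω σ) then 1 else 0 := by
  unfold zeroDefectCount
  rw [List.length_append, List.length_singleton,
    card_filter_range_succ_of_iff fun j hj => by
      rw [List.getD_append _ _ _ _ (h ▸ hj), isDefect_append_singleton_of_lt cs h s b hj]]
  simp only [getD_append_singleton_length h, isDefect_append_singleton_length cs h]

lemma plainZeroCount_append_singleton (h : σ.length = ω.length) (s : B) (b : Bool) :
    plainZeroCount cs (ω ++ [s]) (σ ++ [b]) = plainZeroCount cs ω σ +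
      if b = false ∧
        ¬ cs.length (maskProd cs ω σ * cs.simple s) < cs.length (maskProd cs ω σ) then 1 else 0 := by
  unfold plainZeroCount
  rw [List.length_append, List.length_singleton,
    card_filter_range_succ_of_iff fun j hj => by
      rw [List.getD_append _ _ _ _ (h ▸ hj), isDefect_append_singleton_of_lt cs h s b hj]]
  simp only [getD_append_singleton_length h, isDefect_append_singleton_length cs h]

/-- `l(w) - l(w^σ) - 2 d(σ) = D(σ)` with all terms moved to the side where they are added. -/
theorem length_add_zeroDefectCount (h : σ.length = ω.length) :
    ω.length + zeroDefectCount cs ω σ =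
      cs.length (maskProd cs ω σ) + 2 * defectCount cs ω σ + plainZeroCount cs ω σ := by
  induction ω using List.reverseRecOn generalizing σ with
  | nil =>
    rw [List.eq_nil_of_length_eq_zero h]
    simp [maskProd, maskedWord, defectCount, zeroDefectCount, plainZeroCount]
  | append_singleton ω s ih =>
    rcases List.eq_nil_or_concat σ with rfl | ⟨σ, b, rfl⟩
    · simp at h
    have hσ : σ.length = ω.length := by simpa using h
    have hind := ih hσ
    have hstep := cs.length_mul_simple (maskProd cs ω σ) s
    rw [List.concat_eq_append, List.length_append, List.length_singleton,
      maskProd_append_singleton cs hσ, defectCount_append_singleton cs hσ,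
      zeroDefectCount_append_singleton cs hσ, plainZeroCount_append_singleton cs hσ]
    cases b <;> simp only [Bool.false_eq_true, Bool.true_eq_false, if_true, if_false, mul_one,
      true_and, false_and] <;> split_ifs <;> omega

theorem defectCount_le_of_dstat_pos (h : σ.length = ω.length) (hD : 0 < Dstat cs ω σ) :
    defectCount cs ω σ ≤ (ω.length - cs.length (maskProd cs ω σ) - 1) / 2 := by
  have := length_add_zeroDefectCount cs h
  unfold Dstat at hD
  omega

end

end DeodharMu

open DeodharMu in
theorem stmt2 [DecidableEq W] (cs : CoxeterSystem M W) (ω : List B)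
    (hred : cs.IsReduced ω)
    (hD : ∀ σ : List Bool, IsProperMask ω σ → 0 < Dstat cs ω σ) :
    ∀ x : W, bruhatLT cs x (cs.wordProd ω) →
      (Ppoly cs ω x).degree ≤
        (((cs.length (cs.wordProd ω) - cs.length x - 1) / 2 : ℕ) : WithBot ℕ) := by
  intro x hx
  refine (degree_sum_le _ _).trans (Finset.sup_le fun m _ => ?_)
  split_ifs with hm
  · have hproper : IsProperMask ω (List.ofFn m) := ⟨List.length_ofFn, fun hall => hx.2 <| by
      rw [← hm, hall, maskProd, maskedWord_replicate_true]⟩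
    rw [degree_X_pow, hred, ← hm]
    exact_mod_cast defectCount_le_of_dstat_pos cs List.length_ofFn (hD _ hproper)
  · simp
end

section
/- Let w be a fully commutative element of a Coxeter group, i.e., any two reduced expressions for w are related by interchanging adjacent commuting generators. Then no reduced expression for w contains a factor s t s with s, t non-commuting generators (w is short-braid avoiding), provided no reduced expression for w contains such a factor after commutation moves; conversely, in a simply-laced Coxeter group (all bond orders are 2 or 3), w is fully commutative if and only if w is short-braid avoiding. -/
open CoxeterSystem Polynomial

variable {B W : Type*} [Group W] {M : CoxeterMatrix B}

/-!
The parity of the number of occurrences of `t` in the left inversion sequence of a word depends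
only on the product of the word: it is read off from Tits' permutation representation of `W` on
`W × ZMod 2`. Hence every left descent `s` of `w` occurs in the left inversion sequence of every
word for `w`, and deleting the corresponding letter is the exchange property. For two left
descents with `s ≠ t` this produces a reduced expression of `w` beginning with `s t`, and, when
`m(s,t) = 3`, one beginning with `s t s`.

So in the simply-laced case any two left descents of a short-braid avoiding `w` commute, and
induction on the length shows that two reduced expressions beginning with `s` and `t` are both
commutation equivalent to expressions beginning with `s t` and `t s` respectively. Conversely a
braid move `s t s ↦ t s t` changes the letter content of a reduced expression, which commutation
moves preserve. Distinct indices give distinct generators, by the integral geometric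
representation.
-/

theorem List.count_map_range_add_self {α : Type*} [DecidableEq α] (f : ℕ → α) (m : ℕ)
    (hf : ∀ k, f (m + k) = f k) (a : α) :
    ((List.range (m + m)).map f).count a = 2 * ((List.range m).map f).count a := by
  rw [List.range_add, List.map_append, List.map_map, List.count_append]
  simp only [Function.comp_def, hf]
  ring

namespace CoxeterMatrix

def IsSimplyLaced (M : CoxeterMatrix B) : Prop :=
  ∀ a b : B, a ≠ b → M a b = 2 ∨ M a b = 3

open Classical in
/-- The entries `-2 cos (π / m)` of the Gram matrix of the geometric representation, which are
integers when every `m` is `1`, `2` or `3`. -/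
noncomputable def simplyLacedCartan (M : CoxeterMatrix B) (a b : B) : ℤ :=
  if a = b then 2 else if M a b = 2 then 0 else -1

noncomputable def corootPairing (M : CoxeterMatrix B) (a : B) : (B →₀ ℤ) →ₗ[ℤ] ℤ :=
  Finsupp.linearCombination ℤ fun c => M.simplyLacedCartan c a

noncomputable def simplyLacedReflection (M : CoxeterMatrix B) (a : B) :
    Module.End ℤ (B →₀ ℤ) :=
  LinearMap.id - (M.corootPairing a).smulRight (Finsupp.single a 1)

theorem simplyLacedReflection_apply (a : B) (x : B →₀ ℤ) :
    M.simplyLacedReflection a x = x - M.corootPairing a x • Finsupp.single a 1 :=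
  rfl

theorem corootPairing_single (a c : B) :
    M.corootPairing a (Finsupp.single c 1) = M.simplyLacedCartan c a := by
  simp [corootPairing]

theorem simplyLacedCartan_self (a : B) : M.simplyLacedCartan a a = 2 := by
  simp [simplyLacedCartan]

theorem simplyLacedCartan_of_eq_two {a b : B} (hab : a ≠ b) (hm : M a b = 2) :
    M.simplyLacedCartan a b = 0 := by
  simp [simplyLacedCartan, hab, hm]

theorem simplyLacedCartan_of_eq_three {a b : B} (hab : a ≠ b) (hm : M a b = 3) :
    M.simplyLacedCartan a b = -1 := by
  simp [simplyLacedCartan, hab, hm]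

theorem isLiftable_simplyLacedReflection (hM : M.IsSimplyLaced) :
    M.IsLiftable M.simplyLacedReflection := by
  intro a b
  refine LinearMap.ext fun x => ?_
  by_cases hab : a = b
  · subst hab
    simp only [M.diagonal, pow_one, Module.End.mul_apply, simplyLacedReflection_apply, map_sub,
      map_smul, corootPairing_single, simplyLacedCartan_self, Module.End.one_apply]
    module
  have hba := M.symmetric b a
  rcases hM a b hab with hm | hm
  · simp only [hm, pow_succ, pow_zero, one_mul, Module.End.mul_apply, simplyLacedReflection_apply,
      map_sub, map_smul, corootPairing_single, simplyLacedCartan_self, Module.End.one_apply,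
      simplyLacedCartan_of_eq_two hab hm, simplyLacedCartan_of_eq_two (Ne.symm hab) (hba ▸ hm)]
    module
  · simp only [hm, pow_succ, pow_zero, one_mul, Module.End.mul_apply, simplyLacedReflection_apply,
      map_sub, map_smul, corootPairing_single, simplyLacedCartan_self, Module.End.one_apply,
      simplyLacedCartan_of_eq_three hab hm, simplyLacedCartan_of_eq_three (Ne.symm hab) (hba ▸ hm)]
    module

end CoxeterMatrix

namespace CoxeterSystem

variable (cs : CoxeterSystem M W)

local prefix:100 "s" => cs.simple
local prefix:100 "π" => cs.wordProd
local prefix:100 "lis" => cs.leftInvSeq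

theorem simple_injective_of_isSimplyLaced (hM : M.IsSimplyLaced) :
    Function.Injective cs.simple := by
  intro a b h
  by_contra hab
  have hrep := congrArg (cs.lift ⟨_, M.isLiftable_simplyLacedReflection hM⟩) h
  rw [cs.lift_apply_simple, cs.lift_apply_simple] at hrep
  have hcoeff := congrArg (fun f : Module.End ℤ (B →₀ ℤ) => f (Finsupp.single a 1) a) hrep
  simp only [CoxeterMatrix.simplyLacedReflection_apply, Finsupp.sub_apply, Finsupp.smul_apply,
    Finsupp.single_eq_same, Finsupp.single_eq_of_ne hab, CoxeterMatrix.corootPairing_single,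
    CoxeterMatrix.simplyLacedCartan_self, smul_eq_mul] at hcoeff
  omega

theorem simple_mul_simple_comm_of_eq_two {i i' : B} (hm : M i i' = 2) :
    s i * s i' = s i' * s i := by
  have h := cs.simple_mul_simple_pow i i'
  rw [hm, pow_two, mul_eq_one_iff_eq_inv, mul_inv_rev, inv_simple, inv_simple] at h
  exact h

theorem wordProd_cons_cons_swap {i i' : B} (hm : M i i' = 2) (ω : List B) :
    π (i' :: i :: ω) = π (i :: i' :: ω) := by
  simp only [wordProd_cons, ← mul_assoc, cs.simple_mul_simple_comm_of_eq_two hm]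

theorem simple_braid_of_eq_three {i i' : B} (hm : M i i' = 3) :
    s i * s i' * s i = s i' * s i * s i' := by
  have h := cs.wordProd_braidWord_eq i i'
  rw [braidWord, braidWord, hm, M.symmetric i' i, hm] at h
  simpa [alternatingWord, wordProd, mul_assoc] using h.symm

theorem alternatingWord_two_mul_succ (i i' : B) (m : ℕ) :
    alternatingWord i i' (2 * (m + 1)) = i :: i' :: alternatingWord i i' (2 * m) := by
  rw [show 2 * (m + 1) = 2 * m + 1 + 1 by ring, alternatingWord_succ', alternatingWord_succ']
  simp

theorem pow_eq_prod_map_alternatingWord {G : Type*} [Monoid G] (f : B → G) (i i' : B) (m : ℕ) :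
    (f i * f i') ^ m = ((alternatingWord i i' (2 * m)).map f).prod := by
  induction m with
  | zero => simp [alternatingWord]
  | succ m ih => simp [alternatingWord_two_mul_succ, pow_succ', ih, mul_assoc]

theorem leftInvSeq_alternatingWord (i i' : B) (p : ℕ) :
    lis (alternatingWord i i' (2 * p)) =
      (List.range (2 * p)).map fun k => s i * (s i' * s i) ^ k := by
  refine List.ext_getElem (by simp) fun k hk _ => ?_
  rw [getElem_leftInvSeq_alternatingWord cs i i' p k (by simpa using hk),
    prod_alternatingWord_eq_mul_pow]
  simp [show (2 * k + 1) / 2 = k by omega]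

theorem simple_mul_mul_simple_eq_simple_iff (i : B) (u : W) : s i * u * s i = s i ↔ u = s i := by
  refine ⟨fun h => ?_, fun h => by simp [h]⟩
  simpa [mul_assoc] using congrArg (fun v => s i * v * s i) h

theorem mem_leftInvSeq_cons_iff {i : B} {ω : List B} {t : W} :
    t ∈ lis (i :: ω) ↔ t = s i ∨ s i * t * s i ∈ lis ω := by
  have hconj : t = MulAut.conj (s i) (s i * t * s i) := by simp [mul_assoc]
  rw [leftInvSeq, List.mem_cons]
  nth_rw 2 [hconj]
  rw [List.mem_map_of_injective (MulAut.conj (s i)).injective]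

section Parity

variable [DecidableEq W]

theorem count_leftInvSeq_cons (i : B) (ω : List B) (u : W) :
    (lis (i :: ω)).count (s i * u * s i) = (lis ω).count u + if u = s i then 1 else 0 := by
  have hconj : s i * u * s i = MulAut.conj (s i) u := by simp
  rw [leftInvSeq, List.count_cons, hconj,
    List.count_map_of_injective _ _ (MulAut.conj (s i)).injective, ← hconj]
  simp only [beq_iff_eq, eq_comm (a := s i), simple_mul_mul_simple_eq_simple_iff]

def parityAction (i : B) : Equiv.Perm (W × ZMod 2) :=
  (MulAut.conj (s i)).toEquiv.prodShear fun t => Equiv.addRight (if t = s i then 1 else 0)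

theorem parityAction_apply (i : B) (t : W) (c : ZMod 2) :
    cs.parityAction i (t, c) = (s i * t * (s i)⁻¹, c + if t = s i then 1 else 0) :=
  rfl

theorem prod_map_parityAction_apply (ω : List B) (t : W) (c : ZMod 2) :
    (ω.map cs.parityAction).prod (t, c) =
      (π ω * t * (π ω)⁻¹, c + (lis ω).count (π ω * t * (π ω)⁻¹)) := by
  induction ω with
  | nil => simp
  | cons i ω ih =>
    have hconj : π (i :: ω) * t * (π (i :: ω))⁻¹ = s i * (π ω * t * (π ω)⁻¹) * s i := by
      simp [wordProd_cons, mul_assoc]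
    rw [List.map_cons, List.prod_cons, Equiv.Perm.mul_apply, ih, parityAction_apply, hconj,
      count_leftInvSeq_cons, inv_simple]
    push_cast [add_assoc]
    rfl

theorem isLiftable_parityAction : M.IsLiftable cs.parityAction := by
  intro i i'
  refine Equiv.ext fun ⟨t, c⟩ => ?_
  have hπ : π (alternatingWord i i' (2 * M i i')) = 1 := by
    simp [prod_alternatingWord_eq_mul_pow]
  -- the left inversion sequence of the relation word runs twice through the reflections of
  -- the dihedral subgroup
  have hcount : ((lis (alternatingWord i i' (2 * M i i'))).count t : ZMod 2) = 0 := by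
    rw [leftInvSeq_alternatingWord, two_mul, List.count_map_range_add_self]
    · simp [show (2 : ZMod 2) = 0 from rfl]
    · intro k
      rw [pow_add, simple_mul_simple_pow', one_mul]
  rw [pow_eq_prod_map_alternatingWord, prod_map_parityAction_apply, hπ]
  simpa using hcount

def parityRep : W →* Equiv.Perm (W × ZMod 2) :=
  cs.lift ⟨cs.parityAction, cs.isLiftable_parityAction⟩

theorem parityRep_wordProd (ω : List B) : cs.parityRep (π ω) = (ω.map cs.parityAction).prod := by
  rw [wordProd, map_list_prod, List.map_map]
  exact congrArg _ (List.map_congr_left fun i _ => cs.lift_apply_simple _ i)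

theorem count_leftInvSeq_cast_eq_of_wordProd_eq {ω ω' : List B} (h : π ω = π ω') (t : W) :
    ((lis ω).count t : ZMod 2) = (lis ω').count t := by
  have key := congrArg (fun g => (cs.parityRep g ((π ω)⁻¹ * t * π ω, 0)).2) h
  simp only [parityRep_wordProd, prod_map_parityAction_apply] at key
  rw [← h] at key
  simpa [mul_assoc] using key

end Parity

theorem mem_leftInvSeq_of_isLeftDescent {ω : List B} {i : B}
    (hi : cs.IsLeftDescent (π ω) i) : s i ∈ lis ω := by
  classical
  obtain ⟨τ, hτ, hτπ⟩ := cs.exists_isReduced (s i * π ω)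
  have hπ : π (i :: τ) = π ω := by rw [wordProd_cons, ← hτπ, simple_mul_simple_cancel_left]
  have hτi : s i ∉ lis τ := fun hmem => by
    have := (cs.isLeftInversion_of_mem_leftInvSeq hτ hmem).2
    rw [← hτπ, simple_mul_simple_cancel_left] at this
    exact lt_asymm hi this
  have hcount : (lis (i :: τ)).count (s i) = 1 := by
    simpa [List.count_eq_zero_of_not_mem hτi] using cs.count_leftInvSeq_cons i τ (s i)
  by_contra hωi
  have := cs.count_leftInvSeq_cast_eq_of_wordProd_eq hπ (s i)
  rw [hcount, List.count_eq_zero_of_not_mem hωi] at this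
  exact absurd this (by decide)

theorem exists_length_add_one_eq_of_mem_leftInvSeq {ω : List B} {t : W} (ht : t ∈ lis ω) :
    ∃ ω' : List B, ω'.length + 1 = ω.length ∧ π ω' = t * π ω := by
  obtain ⟨j, hj, rfl⟩ := List.mem_iff_getElem.mp ht
  rw [length_leftInvSeq] at hj
  refine ⟨ω.eraseIdx j, List.length_eraseIdx_add_one hj, ?_⟩
  rw [← getD_leftInvSeq_mul_wordProd, List.getD_eq_getElem]

theorem isLeftDescent_wordProd_cons {i : B} {ω : List B} (hω : cs.IsReduced (i :: ω)) :
    cs.IsLeftDescent (π (i :: ω)) i := by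
  have := cs.length_wordProd_le ω
  rw [IsLeftDescent, hω.eq, wordProd_cons, simple_mul_simple_cancel_left, List.length_cons]
  omega

theorem isReduced_cons_of_isLeftDescent {w : W} {i : B} (hi : cs.IsLeftDescent w i)
    {τ : List B} (hτ : cs.IsReduced τ) (hτπ : π τ = s i * w) : cs.IsReduced (i :: τ) := by
  have := cs.length_simple_mul w i
  rw [IsLeftDescent] at hi
  rw [IsReduced, wordProd_cons, hτπ, simple_mul_simple_cancel_left, List.length_cons,
    ← hτ.eq, hτπ]
  omega

theorem exists_isReduced_cons_of_isLeftDescent {w : W} {i : B} (hi : cs.IsLeftDescent w i) :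
    ∃ δ : List B, cs.IsReduced (i :: δ) ∧ π (i :: δ) = w := by
  obtain ⟨δ, hδ, hδπ⟩ := cs.exists_isReduced (s i * w)
  refine ⟨δ, cs.isReduced_cons_of_isLeftDescent hi hδ hδπ.symm, ?_⟩
  rw [wordProd_cons, ← hδπ, simple_mul_simple_cancel_left]

theorem exists_isReduced_cons_cons {w : W} {i i' : B} (hne : s i ≠ s i')
    (hi : cs.IsLeftDescent w i) (hi' : cs.IsLeftDescent w i') :
    ∃ ε : List B, cs.IsReduced (i :: i' :: ε) ∧ π (i :: i' :: ε) = w := by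
  obtain ⟨δ, hδ, hπ⟩ := cs.exists_isReduced_cons_of_isLeftDescent hi'
  have hmem : s i ∈ lis (i' :: δ) := cs.mem_leftInvSeq_of_isLeftDescent (hπ ▸ hi)
  obtain ⟨ε, hεlen, hεπ⟩ := cs.exists_length_add_one_eq_of_mem_leftInvSeq
    ((mem_leftInvSeq_cons_iff cs).mp hmem |>.resolve_left hne)
  have hπ' : π (i :: i' :: ε) = w := by
    rw [← hπ, wordProd_cons, wordProd_cons, wordProd_cons, hεπ]
    simp [mul_assoc]
  refine ⟨ε, ?_, hπ'⟩
  rw [IsReduced, hπ', ← hπ, hδ.eq]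
  simp only [List.length_cons]
  omega

theorem exists_isReduced_cons_cons_cons {w : W} {i i' : B} (hne : s i ≠ s i') (hm : M i i' = 3)
    (hi : cs.IsLeftDescent w i) (hi' : cs.IsLeftDescent w i') :
    ∃ ε : List B, cs.IsReduced (i :: i' :: i :: ε) ∧ π (i :: i' :: i :: ε) = w := by
  obtain ⟨δ, hδ, hπ⟩ := cs.exists_isReduced_cons_cons hne hi hi'
  have hbraid := cs.simple_braid_of_eq_three hm
  have hmem : s i' ∈ lis (i :: i' :: δ) := cs.mem_leftInvSeq_of_isLeftDescent (hπ ▸ hi')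
  simp only [mem_leftInvSeq_cons_iff] at hmem
  obtain hi'i | hconj | hmem := hmem
  · exact absurd hi'i.symm hne
  · refine absurd ?_ hne
    rw [hbraid, mul_eq_right, mul_eq_one_iff_eq_inv, inv_simple] at hconj
    exact hconj.symm
  have hsi : s i' * (s i * s i' * s i) * s i' = s i := by
    rw [hbraid]
    simp [← mul_assoc]
  rw [hsi] at hmem
  obtain ⟨ε, hεlen, hεπ⟩ := cs.exists_length_add_one_eq_of_mem_leftInvSeq hmem
  have hπ' : π (i :: i' :: i :: ε) = w := by
    rw [← hπ, wordProd_cons, wordProd_cons, wordProd_cons, hεπ, wordProd_cons, wordProd_cons]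
    simp
  refine ⟨ε, ?_, hπ'⟩
  rw [IsReduced, hπ', ← hπ, hδ.eq]
  simp only [List.length_cons]
  omega

end CoxeterSystem

namespace DeodharMu

open CoxeterSystem

theorem CommMove.symm {ω ω' : List B} (h : CommMove M ω ω') : CommMove M ω' ω := by
  obtain ⟨l₁, l₂, s, t, hm, rfl, rfl⟩ := h
  exact ⟨l₁, l₂, t, s, M.symmetric s t ▸ hm, rfl, rfl⟩

theorem CommMove.cons {ω ω' : List B} (i : B) (h : CommMove M ω ω') :
    CommMove M (i :: ω) (i :: ω') := by
  obtain ⟨l₁, l₂, s, t, hm, rfl, rfl⟩ := h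
  exact ⟨i :: l₁, l₂, s, t, hm, rfl, rfl⟩

theorem CommMove.perm {ω ω' : List B} (h : CommMove M ω ω') : ω.Perm ω' := by
  obtain ⟨l₁, l₂, s, t, -, rfl, rfl⟩ := h
  simpa using List.Perm.append_left l₁ (List.Perm.swap t s l₂)

theorem commMove_cons_cons {i i' : B} (hm : M i i' = 2) (ω : List B) :
    CommMove M (i :: i' :: ω) (i' :: i :: ω) :=
  ⟨[], ω, i, i', hm, rfl, rfl⟩

theorem reflTransGen_commMove_symm {ω ω' : List B}
    (h : Relation.ReflTransGen (CommMove M) ω ω') : Relation.ReflTransGen (CommMove M) ω' ω := by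
  induction h with
  | refl => rfl
  | tail _ hmove ih => exact ih.head hmove.symm

theorem reflTransGen_commMove_cons {ω ω' : List B} (i : B)
    (h : Relation.ReflTransGen (CommMove M) ω ω') :
    Relation.ReflTransGen (CommMove M) (i :: ω) (i :: ω') :=
  Relation.ReflTransGen.lift (List.cons i) (fun _ _ => CommMove.cons i) _ _ h

theorem perm_of_reflTransGen_commMove {ω ω' : List B}
    (h : Relation.ReflTransGen (CommMove M) ω ω') : ω.Perm ω' := by
  induction h with
  | refl => rfl
  | tail _ hmove ih => exact ih.trans hmove.perm

variable {cs : CoxeterSystem M W}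

local prefix:100 "s" => cs.simple
local prefix:100 "π" => cs.wordProd

theorem ShortBraidAvoiding.simple_mul {w : W} (hw : ShortBraidAvoiding cs w) {i : B}
    (hi : cs.IsLeftDescent w i) : ShortBraidAvoiding cs (s i * w) := by
  rintro τ hτ hτπ ⟨l₁, l₂, a, b, hm, rfl⟩
  refine hw (i :: _) (cs.isReduced_cons_of_isLeftDescent hi hτ hτπ) ?_ ⟨i :: l₁, l₂, a, b, hm, rfl⟩
  rw [wordProd_cons, hτπ, simple_mul_simple_cancel_left]

theorem shortBraidAvoiding_of_fullyCommutative (hM : M.IsSimplyLaced) {w : W}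
    (hw : FullyCommutative cs w) : ShortBraidAvoiding cs w := by
  rintro _ hω rfl ⟨l₁, l₂, a, b, hm, rfl⟩
  have hab : a ≠ b := by
    rintro rfl
    rw [M.diagonal] at hm
    omega
  have hm3 : M a b = 3 := (hM a b hab).resolve_left (by omega)
  have hbraid : π [b, a, b] = π [a, b, a] := by
    simpa [wordProd, mul_assoc] using (cs.simple_braid_of_eq_three hm3).symm
  have hπ : π (l₁ ++ [b, a, b] ++ l₂) = π (l₁ ++ [a, b, a] ++ l₂) := by
    simp only [wordProd_append, hbraid]
  have hω' : cs.IsReduced (l₁ ++ [b, a, b] ++ l₂) := by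
    rw [CoxeterSystem.IsReduced, hπ, hω.eq]
    simp
  classical
  have hcount := (perm_of_reflTransGen_commMove (hw _ _ hω rfl hω' hπ)).count_eq a
  simp [List.count_append, Ne.symm hab] at hcount

theorem ShortBraidAvoiding.exists_isReduced_cons_cons (hM : M.IsSimplyLaced) {w : W}
    (hw : ShortBraidAvoiding cs w) {i i' : B} (hne : i ≠ i') (hi : cs.IsLeftDescent w i)
    (hi' : cs.IsLeftDescent w i') :
    M i i' = 2 ∧ ∃ ε : List B, cs.IsReduced (i :: i' :: ε) ∧ π (i :: i' :: ε) = w := by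
  have hsne := (cs.simple_injective_of_isSimplyLaced hM).ne hne
  refine ⟨(hM i i' hne).resolve_right fun hm => ?_, cs.exists_isReduced_cons_cons hsne hi hi'⟩
  obtain ⟨ε, hε, hεπ⟩ := cs.exists_isReduced_cons_cons_cons hsne hm hi hi'
  exact hw _ hε hεπ ⟨[], ε, i, i', hm.ge, rfl⟩

theorem reflTransGen_commMove_of_shortBraidAvoiding (hM : M.IsSimplyLaced) (n : ℕ) :
    ∀ {α β : List B}, α.length = n → cs.IsReduced α → cs.IsReduced β → π α = π β →
      ShortBraidAvoiding cs (π α) → Relation.ReflTransGen (CommMove M) α β := by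
  induction n with
  | zero =>
    intro α β hn hα hβ hπ _
    have hβn : β.length = 0 := by rw [← hβ.eq, ← hπ, hα.eq, hn]
    rw [List.length_eq_zero_iff.mp hn, List.length_eq_zero_iff.mp hβn]
  | succ n ih =>
    intro α β hn hα hβ hπ hw
    have hcons : ∀ {j : B} {γ δ : List B}, cs.IsReduced (j :: γ) → cs.IsReduced (j :: δ) →
        π (j :: γ) = π α → π (j :: δ) = π α →
        Relation.ReflTransGen (CommMove M) (j :: γ) (j :: δ) := by
      intro j γ δ hγ hδ hγπ hδπ
      have hγn : γ.length = n := by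
        have := hγ.eq
        rw [hγπ, hα.eq, hn, List.length_cons] at this
        omega
      have hw' := hw.simple_mul (hγπ ▸ cs.isLeftDescent_wordProd_cons hγ)
      rw [← hγπ, wordProd_cons, simple_mul_simple_cancel_left] at hw'
      refine reflTransGen_commMove_cons j (ih hγn (hγ.drop 1) (hδ.drop 1) ?_ hw')
      rw [← mul_right_inj (s j), ← wordProd_cons, ← wordProd_cons, hγπ, hδπ]
    obtain ⟨i, α₀, rfl⟩ := List.exists_cons_of_length_eq_add_one hn
    obtain ⟨i', β₀, rfl⟩ := List.exists_cons_of_length_eq_add_one (hβ.eq ▸ hπ ▸ hα.eq ▸ hn)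
    by_cases hii' : i = i'
    · subst hii'
      exact hcons hα hβ rfl hπ.symm
    have hi := cs.isLeftDescent_wordProd_cons hα
    have hi' := hπ ▸ cs.isLeftDescent_wordProd_cons hβ
    obtain ⟨hm, ε, hε, hεπ⟩ := hw.exists_isReduced_cons_cons hM hii' hi hi'
    have hεπ' : π (i' :: i :: ε) = π (i :: α₀) := by rw [cs.wordProd_cons_cons_swap hm, hεπ]
    have hε' : cs.IsReduced (i' :: i :: ε) := by
      rw [CoxeterSystem.IsReduced, cs.wordProd_cons_cons_swap hm]
      exact hε
    exact ((hcons hα hε rfl hεπ).tail (commMove_cons_cons hm ε)).trans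
      (reflTransGen_commMove_symm (hcons hβ hε' hπ.symm hεπ'))

theorem fullyCommutative_of_shortBraidAvoiding (hM : M.IsSimplyLaced) {w : W}
    (hw : ShortBraidAvoiding cs w) : FullyCommutative cs w := by
  rintro α β hα rfl hβ hπ
  exact reflTransGen_commMove_of_shortBraidAvoiding hM _ rfl hα hβ hπ.symm hw

end DeodharMu

open DeodharMu in
theorem stmt8 (cs : CoxeterSystem M W) (w : W) :
    (FullyCommutative cs w →
      (∀ ω' : List B, (∃ ω : List B, cs.IsReduced ω ∧ cs.wordProd ω = w ∧
          Relation.ReflTransGen (CommMove M) ω ω') → ¬ HasShortBraid M ω') →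
      ShortBraidAvoiding cs w) ∧
    ((∀ s t : B, s ≠ t → M s t = 2 ∨ M s t = 3) →
      (FullyCommutative cs w ↔ ShortBraidAvoiding cs w)) :=
  ⟨fun _ hnone ω hω hπ => hnone ω ⟨ω, hω, hπ, .refl⟩,
    fun hM =>
      ⟨shortBraidAvoiding_of_fullyCommutative hM, fullyCommutative_of_shortBraidAvoiding hM⟩⟩
end

section
/- Let w = w_1...w_k be a reduced expression for a fully commutative element w of a Coxeter group, and define the heap partial order on {1,...,k} as the transitive closure of the relation i ⋖ j when i < j and w_i does not commute with w_j. If w' is another reduced expression for w, then the labeled posets (heaps) of w and w' are isomorphic as labeled posets. -/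
/-!
A commutation move `… s t … ↦ … t s …` is realised on positions by the transposition of the two
swapped places. It preserves labels and the relative order of every pair of non-commuting
letters, so it maps the covering relation of one heap onto that of the other. Since `w` is fully
commutative, any two reduced expressions are joined by a chain of commutation moves, and
composing the transpositions gives the labelled isomorphism of heaps.
-/

open CoxeterSystem Polynomial

variable {B W : Type*} [Group W] {M : CoxeterMatrix B}

theorem CoxeterSystem.commute_simple_of_eq_two (cs : CoxeterSystem M W) {s t : B}
    (h : M s t = 2) : Commute (cs.simple s) (cs.simple t) := by
  have braid := cs.wordProd_braidWord_eq s t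
  rw [braidWord, braidWord, M.symmetric t s, h] at braid
  simpa [Commute, SemiconjBy, alternatingWord, wordProd] using braid

theorem Nat.swap_succ_lt_swap_succ_iff {n i j : ℕ} (h : ¬(i = n ∧ j = n + 1))
    (h' : ¬(i = n + 1 ∧ j = n)) :
    Equiv.swap n (n + 1) i < Equiv.swap n (n + 1) j ↔ i < j := by
  simp only [Equiv.swap_apply_def]
  split_ifs <;> omega

theorem List.getElem_swap_pair {α : Type*} (l₁ l₂ : List α) (s t : α) (i : ℕ)
    (hi : i < (l₁ ++ [s, t] ++ l₂).length) :
    (l₁ ++ [t, s] ++ l₂)[Equiv.swap l₁.length (l₁.length + 1) i]'(by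
      rw [Equiv.swap_apply_def]; split_ifs <;> simp_all) = (l₁ ++ [s, t] ++ l₂)[i] := by
  simp only [Equiv.swap_apply_def, List.append_assoc, List.cons_append, List.getElem_append]
  split_ifs <;> simp_all [List.getElem_cons] <;> try omega
  simp [show i - l₁.length ≠ 0 by omega, show i - l₁.length - 1 ≠ 0 by omega]

namespace DeodharMu

variable (cs : CoxeterSystem M W)

def HeapIsomorphic (ω ω' : List B) : Prop :=
  ∃ e : Fin ω.length ≃ Fin ω'.length,
    (∀ i : Fin ω.length, ω'.get (e i) = ω.get i) ∧
    (∀ i j : Fin ω.length, HeapLT cs ω i j ↔ HeapLT cs ω' (e i) (e j))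

theorem heapLT_iff_of_equiv {ω ω' : List B} (e : Fin ω.length ≃ Fin ω'.length)
    (hlabel : ∀ i, ω'.get (e i) = ω.get i)
    (horder : ∀ i j, ¬Commute (cs.simple (ω.get i)) (cs.simple (ω.get j)) →
      ((i : ℕ) < j ↔ (e i : ℕ) < e j))
    (i j : Fin ω.length) : HeapLT cs ω i j ↔ HeapLT cs ω' (e i) (e j) := by
  have hlabel_symm (a : Fin ω'.length) : ω.get (e.symm a) = ω'.get a := by
    rw [← hlabel, e.apply_symm_apply]
  unfold HeapLT
  constructor
  · refine Relation.TransGen.lift e ?_ i j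
    rintro a b ⟨hab, hnc⟩
    refine ⟨(horder a b hnc).1 hab, ?_⟩
    rwa [hlabel, hlabel]
  · intro h
    rw [← e.symm_apply_apply i, ← e.symm_apply_apply j]
    refine Relation.TransGen.lift e.symm ?_ _ _ h
    rintro a b ⟨hab, hnc⟩
    rw [← hlabel_symm, ← hlabel_symm] at hnc
    exact ⟨(horder _ _ hnc).2 (by simpa using hab), hnc⟩

theorem HeapIsomorphic.refl (ω : List B) : HeapIsomorphic cs ω ω :=
  ⟨Equiv.refl _, fun _ => rfl, fun _ _ => Iff.rfl⟩

theorem HeapIsomorphic.trans {ω ω' ω'' : List B} :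
    HeapIsomorphic cs ω ω' → HeapIsomorphic cs ω' ω'' → HeapIsomorphic cs ω ω''
  | ⟨e, hlabel, hheap⟩, ⟨e', hlabel', hheap'⟩ =>
    ⟨e.trans e', fun i => (hlabel' _).trans (hlabel i),
      fun i j => (hheap i j).trans (hheap' _ _)⟩

theorem heapIsomorphic_of_commMove {ω ω' : List B} (h : CommMove M ω ω') :
    HeapIsomorphic cs ω ω' := by
  obtain ⟨l₁, l₂, s, t, hst, rfl, rfl⟩ := h
  set n := l₁.length
  have hn : n + 1 < (l₁ ++ [s, t] ++ l₂).length := by simp [n]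
  let e := (Equiv.swap (⟨n, by omega⟩ : Fin _) ⟨n + 1, hn⟩).trans (finCongr (by simp :
    (l₁ ++ [s, t] ++ l₂).length = (l₁ ++ [t, s] ++ l₂).length))
  have he (i : Fin (l₁ ++ [s, t] ++ l₂).length) : (e i : ℕ) = Equiv.swap n (n + 1) i :=
    (Fin.val_injective.swap_apply _ _ i).symm
  have hlabel (i) : (l₁ ++ [t, s] ++ l₂).get (e i) = (l₁ ++ [s, t] ++ l₂).get i := by
    simp only [List.get_eq_getElem, he]
    exact List.getElem_swap_pair l₁ l₂ s t i i.isLt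
  refine ⟨e, hlabel, heapLT_iff_of_equiv cs e hlabel fun i j hnc => ?_⟩
  -- the swap reverses only the pair of positions `n, n + 1`, whose letters `s, t` commute
  have hcomm := cs.commute_simple_of_eq_two hst
  rw [he, he, Nat.swap_succ_lt_swap_succ_iff]
  all_goals
    rintro ⟨hi, hj⟩
    refine hnc ?_
    simp [List.get_eq_getElem, hi, hj, n, hcomm, hcomm.symm]

theorem heapIsomorphic_of_reflTransGen {ω ω' : List B}
    (h : Relation.ReflTransGen (CommMove M) ω ω') : HeapIsomorphic cs ω ω' := by
  induction h with
  | refl => exact .refl cs ω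
  | tail _ hmove ih => exact ih.trans cs (heapIsomorphic_of_commMove cs hmove)

end DeodharMu

open DeodharMu in
theorem stmt9 (cs : CoxeterSystem M W) (w : W) (hfc : FullyCommutative cs w)
    (ω ω' : List B) (hred : cs.IsReduced ω) (hw : cs.wordProd ω = w)
    (hred' : cs.IsReduced ω') (hw' : cs.wordProd ω' = w) :
    ∃ e : Fin ω.length ≃ Fin ω'.length,
      (∀ i : Fin ω.length, ω'.get (e i) = ω.get i) ∧
      (∀ i j : Fin ω.length, HeapLT cs ω i j ↔ HeapLT cs ω' (e i) (e j)) :=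
  heapIsomorphic_of_reflTransGen cs (hfc ω ω' hred hw hred' hw')
end
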